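/- Let S₁, …, S_n be subsets of {1,…,m}, each of cardinality 6, and let k ∈ ℕ. (a) For every x ∈ {0,1}ⁿ the quadratic form identity ∑_{i=1}^m ( ∑_{j : i ∈ S_j} x_j )² = xᵀ(AᵀA)x holds, where A ∈ {0,1}^{m×n} is the incidence matrix with a_{ij} = 1 iff i ∈ S_j. (b) If there exist k indices j₁ < ⋯ < j_k such that the sets S_{j₁}, …, S_{j_k} are pairwise disjoint, then max{ ∑_{j=1}^n x_j : x ∈ {0,1}ⁿ, ∑_{i=1}^m (∑_{j : i ∈ S_j} x_j)² ≤ 6k } = k. -/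

import Mathlib

open Matrix

/-- The quadratic form `xᵀ W x`. -/
noncomputable def quadForm {ι : Type*} [Fintype ι] (W : Matrix ι ι ℝ) (x : ι → ℝ) : ℝ :=
  ∑ i, ∑ j, W i j * x i * x j

/-!
Part (a) is `‖A x‖² = xᵀ (Aᵀ A) x`, since the load `∑_{j ∋ i} x_j` of a point `i` is `(A x)_i`.
For (b), double counting gives `∑_i load_i = 6 ∑_j x_j` because every set has six elements.
For a 0/1 vector the loads are natural numbers, so `load_i ≤ load_i²` and the constraint forces
`6 ∑_j x_j ≤ 6k`. The indicator of `k` pairwise disjoint sets has every load in `{0, 1}`, so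
`∑_i load_i² = ∑_i load_i = 6k` and the bound `k` is attained.
-/

open Finset

lemma quadForm_eq_dotProduct_mulVec {ι : Type*} [Fintype ι] (W : Matrix ι ι ℝ) (x : ι → ℝ) :
    quadForm W x = x ⬝ᵥ (W *ᵥ x) := by
  simp only [quadForm, dotProduct, mulVec, mul_sum]
  exact sum_congr rfl fun i _ => sum_congr rfl fun j _ => by ring

lemma sum_sq_mulVec_eq_quadForm {α ι : Type*} [Fintype α] [Fintype ι] (A : Matrix α ι ℝ)
    (x : ι → ℝ) : ∑ i, (A *ᵥ x) i ^ 2 = quadForm (Aᵀ * A) x := by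
  rw [quadForm_eq_dotProduct_mulVec, ← mulVec_mulVec, dotProduct_mulVec, vecMul_transpose]
  simp only [dotProduct, sq]

lemma sum_le_sq_sum_of_forall_eq_zero_or_eq_one {ι : Type*} {F : Finset ι} {x : ι → ℝ}
    (h01 : ∀ j, x j = 0 ∨ x j = 1) : ∑ j ∈ F, x j ≤ (∑ j ∈ F, x j) ^ 2 := by
  have hN (j : ι) : ∃ N : ℕ, x j = N := (h01 j).elim (⟨0, by simp [·]⟩) (⟨1, by simp [·]⟩)
  choose N hN using hN
  simp only [hN]
  exact_mod_cast Nat.le_self_pow two_ne_zero _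

section Load

variable {α ι : Type*} [Fintype ι] [DecidableEq α]

noncomputable def load (S : ι → Finset α) (x : ι → ℝ) (i : α) : ℝ :=
  ∑ j ∈ univ.filter (fun j => i ∈ S j), x j

lemma load_eq_mulVec {S : ι → Finset α} {A : Matrix α ι ℝ}
    (hA : ∀ i j, A i j = if i ∈ S j then 1 else 0) (x : ι → ℝ) (i : α) :
    load S x i = (A *ᵥ x) i := by
  rw [load, sum_filter, mulVec, dotProduct]
  exact sum_congr rfl fun j _ => by rw [hA]; split_ifs <;> simp

lemma sum_load [Fintype α] {S : ι → Finset α} {d : ℕ} (hS : ∀ j, #(S j) = d) (x : ι → ℝ) :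
    ∑ i, load S x i = d * ∑ j, x j := by
  simp only [load, sum_filter]
  rw [sum_comm, mul_sum]
  refine sum_congr rfl fun j _ => ?_
  rw [sum_ite_mem, univ_inter, sum_const, hS, nsmul_eq_mul]

lemma mul_sum_le_sum_load_sq [Fintype α] {S : ι → Finset α} {d : ℕ} (hS : ∀ j, #(S j) = d)
    {x : ι → ℝ} (h01 : ∀ j, x j = 0 ∨ x j = 1) :
    d * ∑ j, x j ≤ ∑ i, load S x i ^ 2 := by
  rw [← sum_load hS]
  exact sum_le_sum fun i _ => sum_le_sq_sum_of_forall_eq_zero_or_eq_one h01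

variable [DecidableEq ι]

lemma load_indicator {S : ι → Finset α} (T : Finset ι) (i : α) :
    load S (fun j => if j ∈ T then 1 else 0) i = #(T.filter (fun j => i ∈ S j)) := by
  rw [load, sum_ite_mem, sum_const, nsmul_one]
  congr 2
  ext; simp [and_comm]

lemma sum_load_indicator_sq [Fintype α] {S : ι → Finset α} {d : ℕ} (hS : ∀ j, #(S j) = d)
    {T : Finset ι} (hT : (T : Set ι).PairwiseDisjoint S) :
    ∑ i, load S (fun j => if j ∈ T then 1 else 0) i ^ 2 = d * #T := by
  have hsq (i : α) : load S (fun j => if j ∈ T then 1 else 0) i ^ 2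
      = load S (fun j => if j ∈ T then 1 else 0) i := by
    have : #(T.filter (fun j => i ∈ S j)) ≤ 1 := card_le_one.2 fun a ha b hb => by
      simp only [mem_filter] at ha hb
      exact hT.elim_finset ha.1 hb.1 i ha.2 hb.2
    rw [load_indicator]
    interval_cases #(T.filter (fun j => i ∈ S j)) <;> norm_num
  simp only [hsq, sum_load hS, sum_boole, filter_mem_eq_inter, univ_inter]

end Load

theorem stmt_19 {m n : ℕ} (S : Fin n → Finset (Fin m)) (hcard : ∀ j, (S j).card = 6)
    (k : ℕ)
    (A : Matrix (Fin m) (Fin n) ℝ) (hA : ∀ i j, A i j = if i ∈ S j then 1 else 0) :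
    (∀ x : Fin n → ℝ, (∀ j, x j = 0 ∨ x j = 1) →
      (∑ i, (∑ j ∈ Finset.univ.filter (fun j => i ∈ S j), x j) ^ 2) =
        quadForm (Aᵀ * A) x) ∧
    ((∃ T : Finset (Fin n), T.card = k ∧
        ∀ a ∈ T, ∀ b ∈ T, a ≠ b → Disjoint (S a) (S b)) →
      IsGreatest {v : ℝ | ∃ x : Fin n → ℝ, (∀ j, x j = 0 ∨ x j = 1) ∧
        (∑ i, (∑ j ∈ Finset.univ.filter (fun j => i ∈ S j), x j) ^ 2) ≤ 6 * (k : ℝ) ∧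
        v = ∑ j, x j} (k : ℝ)) := by
  refine ⟨fun x _ => ?_, fun ⟨T, hTk, hT⟩ => ⟨?_, ?_⟩⟩
  · change ∑ i, load S x i ^ 2 = _
    simpa only [load_eq_mulVec hA] using sum_sq_mulVec_eq_quadForm A x
  · refine ⟨fun j => if j ∈ T then 1 else 0, fun j => by by_cases j ∈ T <;> simp [*], ?_,
      by simp [hTk]⟩
    change ∑ i, load S _ i ^ 2 ≤ _
    rw [sum_load_indicator_sq hcard fun a ha b hb => hT a ha b hb, hTk]
    norm_num
  · rintro _ ⟨x, h01, hquad, rfl⟩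
    change ∑ i, load S x i ^ 2 ≤ _ at hquad
    have := mul_sum_le_sum_load_sq hcard h01
    push_cast at this
    linarith
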